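/- Let Φ : A → B be an exact functor between triangulated categories. Suppose A admits a classical generator G (i.e., the smallest thick subcategory of A containing G is A itself) such that for every integer i the map Hom_A(G, G[i]) → Hom_B(ΦG, ΦG[i]) induced by Φ is an isomorphism. Then Φ is fully faithful. -/

import Mathlib

open CategoryTheory Limits Pretriangulated

/-- A set of objects of a pretriangulated category is *thick* if it is closed under
isomorphisms, shifts, extensions (hence cones) and direct summands.  The smallest thick
subcategory containing `G` is then described by intersecting all such sets. -/
def IsThickSet {C : Type*} [Category C] [HasZeroObject C] [Preadditive C]
    [HasShift C ℤ] [∀ n : ℤ, (shiftFunctor C n).Additive] [Pretriangulated C]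
    [HasBinaryBiproducts C] (P : Set C) : Prop :=
  (∀ ⦃X Y : C⦄, (X ≅ Y) → X ∈ P → Y ∈ P) ∧
  (∀ (X : C) (n : ℤ), X ∈ P → (X⟦n⟧ : C) ∈ P) ∧
  (∀ T, (T ∈ distTriang C) → T.obj₁ ∈ P → T.obj₂ ∈ P → T.obj₃ ∈ P) ∧
  (∀ X Y : C, (X ⊞ Y) ∈ P → X ∈ P)

set_option linter.unusedSectionVars false

section Aux

variable {A B : Type*} [Category A] [Category B]
    [HasZeroObject A] [Preadditive A] [HasShift A ℤ]
    [∀ n : ℤ, (shiftFunctor A n).Additive] [Pretriangulated A]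
    [HasZeroObject B] [Preadditive B] [HasShift B ℤ]
    [∀ n : ℤ, (shiftFunctor B n).Additive] [Pretriangulated B]
    (Φ : A ⥤ B) [Φ.CommShift ℤ] [Φ.IsTriangulated]

/-- `Φ` is bijective on `Hom(X, Y)`. -/
def FFat (X Y : A) : Prop := Function.Bijective (fun f : X ⟶ Y => Φ.map f)

lemma ffat_transfer {X X' Y Y' : A} (eX : X ≅ X') (eY : Y ≅ Y')
    (h : FFat Φ X Y) : FFat Φ X' Y' := by
  have key : (fun f : X' ⟶ Y' => Φ.map f) =
      (Iso.homCongr (Φ.mapIso eX) (Φ.mapIso eY)) ∘ (fun f : X ⟶ Y => Φ.map f) ∘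
        (Iso.homCongr eX eY).symm := by
    funext f
    simp [Iso.homCongr]
  rw [FFat, key]
  exact (Equiv.bijective _).comp (h.comp (Equiv.bijective _))

lemma ffat_shift {X Y : A} (m : ℤ) (h : FFat Φ X Y) : FFat Φ (X⟦m⟧) (Y⟦m⟧) := by
  have hA : Function.Bijective (fun f : X ⟶ Y => (f⟦m⟧' : X⟦m⟧ ⟶ Y⟦m⟧)) :=
    ⟨fun _ _ h => (shiftFunctor A m).map_injective h,
      fun g => (shiftFunctor A m).map_surjective g⟩
  have hB : Function.Bijective (fun g : Φ.obj X ⟶ Φ.obj Y =>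
      (Φ.commShiftIso m).hom.app X ≫ g⟦m⟧' ≫ (Φ.commShiftIso m).inv.app Y) := by
    have h1 : Function.Bijective (fun g : Φ.obj X ⟶ Φ.obj Y =>
        ((g⟦m⟧' : _ ⟶ _))) :=
      ⟨fun _ _ h => (shiftFunctor B m).map_injective h,
        fun g => (shiftFunctor B m).map_surjective g⟩
    exact (Iso.homCongr (((Φ.commShiftIso m).app X).symm)
      (((Φ.commShiftIso m).app Y).symm)).bijective.comp h1
  rw [FFat, ← Function.Bijective.of_comp_iff _ hA]
  have key : ((fun f : X⟦m⟧ ⟶ Y⟦m⟧ => Φ.map f) ∘ (fun f : X ⟶ Y => f⟦m⟧')) =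
      (fun g : Φ.obj X ⟶ Φ.obj Y =>
        (Φ.commShiftIso m).hom.app X ≫ g⟦m⟧' ≫ (Φ.commShiftIso m).inv.app Y) ∘
        (fun f : X ⟶ Y => Φ.map f) := by
    funext f
    show Φ.map (f⟦m⟧') = _
    rw [← cancel_mono ((Φ.commShiftIso m).hom.app Y), Φ.commShiftIso_hom_naturality]
    simp
  rw [key]
  exact hB.comp h

lemma ffat_ext_right (T : Triangle A) (hT : T ∈ distTriang A) (W : A)
    (h₁ : FFat Φ W T.obj₁) (h₂ : FFat Φ W T.obj₂)
    (h₁' : FFat Φ W (T.obj₁⟦(1:ℤ)⟧)) (h₂' : FFat Φ W (T.obj₂⟦(1:ℤ)⟧)) :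
    FFat Φ W T.obj₃ := by
  have hT' := Φ.map_distinguished T hT
  constructor
  · intro f g hfg
    replace hfg : Φ.map f = Φ.map g := hfg
    have hd : Φ.map (f - g) = 0 := by rw [Φ.map_sub, hfg, sub_self]
    have h1 : (f - g) ≫ T.mor₃ = 0 := by
      apply h₁'.1
      show Φ.map _ = Φ.map 0
      rw [Φ.map_comp, hd, zero_comp, Φ.map_zero]
    obtain ⟨e, he⟩ := Triangle.coyoneda_exact₃ T hT (f - g) h1
    have h2 : Φ.map e ≫ (Φ.mapTriangle.obj T).mor₂ = 0 := by
      show Φ.map e ≫ Φ.map T.mor₂ = 0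
      rw [← Φ.map_comp, ← he, hd]
    obtain ⟨e', he'⟩ := Triangle.coyoneda_exact₂ _ hT' (Φ.map e) h2
    obtain ⟨e'', he''⟩ := h₁.2 e'
    replace he'' : Φ.map e'' = e' := he''
    have he3 : e = e'' ≫ T.mor₁ := by
      apply h₂.1
      show Φ.map e = Φ.map (e'' ≫ T.mor₁)
      rw [Φ.map_comp, he'', he']
      rfl
    have : f - g = 0 := by
      rw [he, he3, Category.assoc, comp_distTriang_mor_zero₁₂ T hT, comp_zero]
    exact sub_eq_zero.mp this
  · intro φ
    obtain ⟨u, hu⟩ := h₁'.2 (φ ≫ Φ.map T.mor₃)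
    replace hu : Φ.map u = φ ≫ Φ.map T.mor₃ := hu
    have h1 : u ≫ (T.mor₁⟦(1:ℤ)⟧') = 0 := by
      apply h₂'.1
      show Φ.map _ = Φ.map 0
      rw [Φ.map_comp, hu, Category.assoc, ← Φ.map_comp,
        comp_distTriang_mor_zero₃₁ T hT, Φ.map_zero, comp_zero, Φ.map_zero]
    obtain ⟨f, hf⟩ := Triangle.coyoneda_exact₁ T hT u h1
    have h2 : (φ - Φ.map f) ≫ (Φ.mapTriangle.obj T).mor₃ = 0 := by
      show (φ - Φ.map f) ≫ (Φ.map T.mor₃ ≫ (Φ.commShiftIso (1:ℤ)).hom.app T.obj₁) = 0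
      have : (φ - Φ.map f) ≫ Φ.map T.mor₃ = 0 := by
        rw [Preadditive.sub_comp, ← hu, ← Φ.map_comp, ← hf, sub_self]
      rw [← Category.assoc, this, zero_comp]
    obtain ⟨ψ, hψ⟩ := Triangle.coyoneda_exact₃ _ hT' _ h2
    obtain ⟨g, hg⟩ := h₂.2 ψ
    replace hg : Φ.map g = ψ := hg
    refine ⟨f + g ≫ T.mor₂, ?_⟩
    show Φ.map _ = φ
    rw [Φ.map_add, Φ.map_comp, hg]
    have : ψ ≫ Φ.map T.mor₂ = φ - Φ.map f := by rw [hψ]; rfl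
    erw [this]
    abel

lemma yoneda_exact₁' (T : Triangle A) (hT : T ∈ distTriang A) {X : A}
    (f : T.obj₁⟦(1:ℤ)⟧ ⟶ X) (hf : T.mor₃ ≫ f = 0) :
    ∃ (g : T.obj₂⟦(1:ℤ)⟧ ⟶ X), f = T.mor₁⟦(1:ℤ)⟧' ≫ g := by
  obtain ⟨g, hg⟩ := Triangle.yoneda_exact₃ _ (rot_of_distTriang T hT) f hf
  exact ⟨-g, by have h' := hg; simp [Triangle.rotate] at h'; rw [h']; exact (Preadditive.neg_comp _ _).trans (Preadditive.comp_neg _ _).symm⟩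

lemma ffat_ext_left (T : Triangle A) (hT : T ∈ distTriang A) (Y : A)
    (h₁ : FFat Φ T.obj₁ Y) (h₂ : FFat Φ T.obj₂ Y)
    (h₁' : FFat Φ (T.obj₁⟦(1:ℤ)⟧) Y) (h₂' : FFat Φ (T.obj₂⟦(1:ℤ)⟧) Y) :
    FFat Φ T.obj₃ Y := by
  have hT' := Φ.map_distinguished T hT
  constructor
  · intro f g hfg
    replace hfg : Φ.map f = Φ.map g := hfg
    have hd : Φ.map (f - g) = 0 := by rw [Φ.map_sub, hfg, sub_self]
    have h1 : T.mor₂ ≫ (f - g) = 0 := by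
      apply h₂.1
      show Φ.map _ = Φ.map 0
      rw [Φ.map_comp, hd, comp_zero, Φ.map_zero]
    obtain ⟨e, he⟩ := Triangle.yoneda_exact₃ T hT (f - g) h1
    have h2 : (Φ.mapTriangle.obj T).mor₃ ≫
        ((Φ.commShiftIso (1:ℤ)).inv.app T.obj₁ ≫ Φ.map e) = 0 := by
      show (Φ.map T.mor₃ ≫ (Φ.commShiftIso (1:ℤ)).hom.app T.obj₁) ≫ _ = 0
      erw [Category.assoc, Iso.hom_inv_id_app_assoc, ← Φ.map_comp, ← he, hd]
    obtain ⟨k', hk'⟩ := yoneda_exact₁' _ hT' _ h2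
    obtain ⟨k, hk⟩ := h₂'.2 ((Φ.commShiftIso (1:ℤ)).hom.app T.obj₂ ≫ k')
    replace hk : Φ.map k = (Φ.commShiftIso (1:ℤ)).hom.app T.obj₂ ≫ k' := hk
    have he3 : e = T.mor₁⟦(1:ℤ)⟧' ≫ k := by
      apply h₁'.1
      show Φ.map e = Φ.map (T.mor₁⟦(1:ℤ)⟧' ≫ k)
      erw [Φ.map_comp, hk, ← Category.assoc, Φ.commShiftIso_hom_naturality,
        Category.assoc]
      have : (Φ.map T.mor₁)⟦(1:ℤ)⟧' ≫ k' = (Φ.commShiftIso (1:ℤ)).inv.app T.obj₁ ≫ Φ.map e :=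
        hk'.symm
      rw [this, Iso.hom_inv_id_app_assoc]
    have : f - g = 0 := by
      rw [he, he3, ← Category.assoc, comp_distTriang_mor_zero₃₁ T hT, zero_comp]
    exact sub_eq_zero.mp this
  · intro φ
    obtain ⟨g, hg⟩ := h₂.2 (Φ.map T.mor₂ ≫ φ)
    replace hg : Φ.map g = Φ.map T.mor₂ ≫ φ := hg
    have h1 : T.mor₁ ≫ g = 0 := by
      apply h₁.1
      show Φ.map _ = Φ.map 0
      rw [Φ.map_comp, hg, ← Category.assoc, ← Φ.map_comp,
        comp_distTriang_mor_zero₁₂ T hT, Φ.map_zero, zero_comp, Φ.map_zero]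
    obtain ⟨h, hh⟩ := Triangle.yoneda_exact₂ T hT g h1
    have h2 : (Φ.mapTriangle.obj T).mor₂ ≫ (φ - Φ.map h) = 0 := by
      show Φ.map T.mor₂ ≫ (φ - Φ.map h) = 0
      rw [Preadditive.comp_sub, ← hg, ← Φ.map_comp, ← hh, sub_self]
    obtain ⟨k', hk'⟩ := Triangle.yoneda_exact₃ _ hT' _ h2
    obtain ⟨k, hk⟩ := h₁'.2 ((Φ.commShiftIso (1:ℤ)).hom.app T.obj₁ ≫ k')
    replace hk : Φ.map k = (Φ.commShiftIso (1:ℤ)).hom.app T.obj₁ ≫ k' := hk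
    refine ⟨h + T.mor₃ ≫ k, ?_⟩
    show Φ.map _ = φ
    rw [Φ.map_add, Φ.map_comp, hk]
    have : Φ.map T.mor₃ ≫ (Φ.commShiftIso (1:ℤ)).hom.app T.obj₁ ≫ k' = φ - Φ.map h := by
      erw [← Category.assoc]; exact hk'.symm
    rw [this]
    abel


lemma ffat_summand_right [HasBinaryBiproducts A] (W X Y : A)
    (h : FFat Φ W (X ⊞ Y)) : FFat Φ W X := by
  constructor
  · intro f g hfg
    replace hfg : Φ.map f = Φ.map g := hfg
    have h1 : f ≫ (biprod.inl : X ⟶ X ⊞ Y) = g ≫ biprod.inl := by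
      apply h.1
      show Φ.map _ = Φ.map _
      rw [Φ.map_comp, Φ.map_comp, hfg]
    have := congrArg (fun t => t ≫ (biprod.fst : X ⊞ Y ⟶ X)) h1
    simpa using this
  · intro φ
    obtain ⟨g, hg⟩ := h.2 (φ ≫ Φ.map (biprod.inl : X ⟶ X ⊞ Y))
    replace hg : Φ.map g = φ ≫ Φ.map (biprod.inl : X ⟶ X ⊞ Y) := hg
    refine ⟨g ≫ biprod.fst, ?_⟩
    show Φ.map _ = φ
    rw [Φ.map_comp, hg, Category.assoc, ← Φ.map_comp, biprod.inl_fst, Φ.map_id,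
      Category.comp_id]

lemma ffat_summand_left [HasBinaryBiproducts A] (X Y Z : A)
    (h : FFat Φ (X ⊞ Y) Z) : FFat Φ X Z := by
  constructor
  · intro f g hfg
    replace hfg : Φ.map f = Φ.map g := hfg
    have h1 : (biprod.fst : X ⊞ Y ⟶ X) ≫ f = biprod.fst ≫ g := by
      apply h.1
      show Φ.map _ = Φ.map _
      rw [Φ.map_comp, Φ.map_comp, hfg]
    have := congrArg (fun t => (biprod.inl : X ⟶ X ⊞ Y) ≫ t) h1
    simpa using this
  · intro φ
    obtain ⟨g, hg⟩ := h.2 (Φ.map (biprod.fst : X ⊞ Y ⟶ X) ≫ φ)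
    replace hg : Φ.map g = Φ.map (biprod.fst : X ⊞ Y ⟶ X) ≫ φ := hg
    refine ⟨biprod.inl ≫ g, ?_⟩
    show Φ.map _ = φ
    rw [Φ.map_comp, hg, ← Category.assoc, ← Φ.map_comp, biprod.inl_fst, Φ.map_id,
      Category.id_comp]

end Aux

/-- Let `Φ : A ⥤ B` be an exact (triangulated) functor between triangulated categories.
If `A` has a classical generator `G` (i.e. `thick G = A`) such that
`Hom(G, G⟦i⟧) → Hom(ΦG, (ΦG)⟦i⟧)` is bijective for all `i : ℤ`, then `Φ` is fully
faithful. -/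
theorem statement0 {A B : Type*} [Category A] [Category B]
    [HasZeroObject A] [Preadditive A] [HasShift A ℤ]
    [∀ n : ℤ, (shiftFunctor A n).Additive] [Pretriangulated A] [HasBinaryBiproducts A]
    [HasZeroObject B] [Preadditive B] [HasShift B ℤ]
    [∀ n : ℤ, (shiftFunctor B n).Additive] [Pretriangulated B]
    (Φ : A ⥤ B) [Φ.CommShift ℤ] [Φ.IsTriangulated]
    (G : A)
    (hG : ∀ P : Set A, IsThickSet P → G ∈ P → ∀ X : A, X ∈ P)
    (hhom : ∀ i : ℤ, Function.Bijective
      (fun f : G ⟶ G⟦i⟧ => Φ.map f ≫ (Φ.commShiftIso i).hom.app G)) :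
    Φ.Full ∧ Φ.Faithful := by
  -- Step 0: plain bijectivity on `Hom(G, G⟦i⟧)`.
  have hbase : ∀ i : ℤ, FFat Φ G (G⟦i⟧) := by
    intro i
    have hc : Function.Bijective
        (fun g : Φ.obj G ⟶ Φ.obj (G⟦i⟧) => g ≫ (Φ.commShiftIso i).hom.app G) := by
      constructor
      · intro a b hab
        have := congrArg (fun t => t ≫ (Φ.commShiftIso i).inv.app G) hab
        simpa using this
      · intro y
        exact ⟨y ≫ (Φ.commShiftIso i).inv.app G, by simp⟩
    have key : (fun f : G ⟶ G⟦i⟧ => Φ.map f ≫ (Φ.commShiftIso i).hom.app G) =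
        (fun g : Φ.obj G ⟶ Φ.obj (G⟦i⟧) => g ≫ (Φ.commShiftIso i).hom.app G) ∘
          (fun f : G ⟶ G⟦i⟧ => Φ.map f) := rfl
    have := hhom i
    rw [key] at this
    exact (Function.Bijective.of_comp_iff' hc _).mp this
  -- Stage 1: `S = {Y | ∀ n, Φ` bijective on `Hom(G⟦n⟧, Y)}` is thick and contains `G`.
  set S : Set A := {Y | ∀ n : ℤ, FFat Φ (G⟦n⟧) Y} with hSdef
  have hSshift : ∀ Y ∈ S, ∀ m : ℤ, (Y⟦m⟧ : A) ∈ S := by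
    intro Y hY m n
    exact ffat_transfer Φ ((shiftFunctorAdd' A (n - m) m n (by ring)).symm.app G)
      (Iso.refl _) (ffat_shift Φ m (hY (n - m)))
  have hGS : G ∈ S := by
    intro n
    exact ffat_transfer Φ (Iso.refl _)
      ((shiftFunctorCompIsoId A (-n) n (by ring)).app G)
      (ffat_shift Φ n (hbase (-n)))
  have hSthick : IsThickSet S := by
    refine ⟨?_, ?_, ?_, ?_⟩
    · intro X Y e hX n
      exact ffat_transfer Φ (Iso.refl _) e (hX n)
    · intro X m hX
      exact hSshift X hX m
    · intro T hT h₁ h₂ n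
      exact ffat_ext_right Φ T hT _ (h₁ n) (h₂ n)
        (hSshift _ h₁ 1 n) (hSshift _ h₂ 1 n)
    · intro X Y hXY n
      exact ffat_summand_right Φ _ X Y (hXY n)
  have hSall : ∀ Y : A, Y ∈ S := hG S hSthick hGS
  -- Stage 2: `T2 = {X | ∀ Y, Φ` bijective on `Hom(X, Y)}` is thick and contains `G`.
  set T2 : Set A := {X | ∀ Y : A, FFat Φ X Y} with hT2def
  have hT2shift : ∀ X ∈ T2, ∀ m : ℤ, (X⟦m⟧ : A) ∈ T2 := by
    intro X hX m Y
    exact ffat_transfer Φ (Iso.refl _)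
      ((shiftFunctorCompIsoId A (-m) m (by ring)).app Y)
      (ffat_shift Φ m (hX (Y⟦(-m : ℤ)⟧)))
  have hGT2 : G ∈ T2 := by
    intro Y
    exact ffat_transfer Φ ((shiftFunctorZero A ℤ).app G) (Iso.refl _) (hSall Y 0)
  have hT2thick : IsThickSet T2 := by
    refine ⟨?_, ?_, ?_, ?_⟩
    · intro X Y e hX Z
      exact ffat_transfer Φ e (Iso.refl _) (hX Z)
    · intro X m hX
      exact hT2shift X hX m
    · intro T hT h₁ h₂ Y
      exact ffat_ext_left Φ T hT Y (h₁ Y) (h₂ Y)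
        (hT2shift _ h₁ 1 Y) (hT2shift _ h₂ 1 Y)
    · intro X Y hXY Z
      exact ffat_summand_left Φ X Y Z (hXY Z)
  have hall : ∀ X Y : A, FFat Φ X Y := fun X Y => hG T2 hT2thick hGT2 X Y
  exact ⟨⟨fun {X Y} => (hall X Y).2⟩, ⟨fun {X Y} {f g} h => (hall X Y).1 h⟩⟩
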